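/- arXiv:1706.09972 — 2 statements merged into one kernel-verified Lean document; each statement's English description precedes it below -/
import Mathlib

section
/- Let d ≥ 1, let w ∈ F_d be a nontrivial word of length k with 0 < k < n, and fix a point x ∈ {1, …, n}. Then the probability, over π_1, …, π_d chosen independently and uniformly at random from S_n, that the k+1 trajectory points x^0, x^1, …, x^k of x under w are not all distinct is at most k² / (n − k). -/
open Classical Filter

/-- The permutation corresponding to a single letter: `(i, true)` stands for `π i`
and `(i, false)` for `(π i)⁻¹`. -/
def letterPerm {d n : ℕ} (π : Fin d → Equiv.Perm (Fin n)) (l : Fin d × Bool) :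
    Equiv.Perm (Fin n) :=
  if l.2 then π l.1 else (π l.1)⁻¹

/-- The `j`-th trajectory point `x^j` of `x` under `w`: writing the reduced word of `w`
as `w_k ⋯ w_1` (with `w_1` acting first), `x^j = (w_j ⋯ w_1)(π)(x)`, i.e. the image of
`x` under the last `j` letters of the reduced word. -/
def traj {d n : ℕ} (π : Fin d → Equiv.Perm (Fin n)) (w : FreeGroup (Fin d))
    (x : Fin n) (j : ℕ) : Fin n :=
  (((w.toWord.drop (w.toWord.length - j)).map (letterPerm π)).prod :
    Equiv.Perm (Fin n)) x

/-- The probability of an event `E` over a tuple of `d` permutations of `{1, …, n}`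
chosen independently and uniformly at random. -/
noncomputable def probTuple (n d : ℕ)
    (E : (Fin d → Equiv.Perm (Fin n)) → Prop) : ℝ :=
  ((Finset.univ.filter E).card : ℝ) /
    (Fintype.card (Fin d → Equiv.Perm (Fin n)) : ℝ)


/-- Modify the generator of letter `t` so that `letterPerm` at `t` gets multiplied
by `c` on the left. -/
def tweak {d n : ℕ} (π : Fin d → Equiv.Perm (Fin n)) (t : Fin d × Bool)
    (c : Equiv.Perm (Fin n)) : Fin d → Equiv.Perm (Fin n) :=
  Function.update π t.1 (if t.2 then c * π t.1 else π t.1 * c⁻¹)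

section
variable {d n : ℕ} (π : Fin d → Equiv.Perm (Fin n)) (w : FreeGroup (Fin d)) (x : Fin n)
  (t : Fin d × Bool) (c : Equiv.Perm (Fin n))

lemma traj_zero : traj π w x 0 = x := by simp [traj]

lemma traj_succ {j : ℕ} (h : j < w.toWord.length) :
    traj π w x (j + 1) =
      letterPerm π (w.toWord[w.toWord.length - (j+1)]'(by omega)) (traj π w x j) := by
  unfold traj
  rw [List.drop_eq_getElem_cons (by omega : w.toWord.length - (j+1) < w.toWord.length)]
  have : w.toWord.length - (j+1) + 1 = w.toWord.length - j := by omega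
  rw [this, List.map_cons, List.prod_cons, Equiv.Perm.mul_apply]

lemma traj_succ' {j : ℕ} (h1 : 1 ≤ j) (h2 : j ≤ w.toWord.length) :
    traj π w x j =
      letterPerm π (w.toWord[w.toWord.length - j]'(by omega)) (traj π w x (j-1)) := by
  obtain ⟨m, rfl⟩ : ∃ m, j = m + 1 := ⟨j - 1, by omega⟩
  simpa using traj_succ π w x (by omega : m < w.toWord.length)

lemma no_inv_pair {p : ℕ} (h : p + 1 < w.toWord.length) :
    ¬ (w.toWord[p+1]'h = ((w.toWord[p]'(by omega)).1, !(w.toWord[p]'(by omega)).2)) := by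
  intro heq
  have hred := FreeGroup.reduce_toWord w
  have hdecomp : w.toWord = w.toWord.take p ++
      (w.toWord[p]'(by omega)) :: (w.toWord[p+1]'h) :: w.toWord.drop (p+2) := by
    conv_lhs => rw [← List.take_append_drop p w.toWord]
    rw [List.drop_eq_getElem_cons (by omega : p < w.toWord.length)]
    rw [List.drop_eq_getElem_cons (by omega : p + 1 < w.toWord.length)]
  rw [heq] at hdecomp
  exact FreeGroup.reduce.not (by rw [hred, hdecomp])

lemma letterPerm_tweak_self : letterPerm (tweak π t c) t = c * letterPerm π t := by
  rcases t with ⟨a, b⟩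
  cases b <;> simp [letterPerm, tweak, Function.update_self, mul_inv_rev]

lemma letterPerm_tweak_flip :
    letterPerm (tweak π t c) (t.1, !t.2) = (letterPerm π t)⁻¹ * c⁻¹ := by
  rcases t with ⟨a, b⟩
  cases b <;> simp [letterPerm, tweak, Function.update_self, mul_inv_rev]

lemma letterPerm_tweak_other (s : Fin d × Bool) (hs : s.1 ≠ t.1) :
    letterPerm (tweak π t c) s = letterPerm π s := by
  simp [letterPerm, tweak, Function.update_of_ne hs]

lemma tweak_tweak (hc : c * c = 1) : tweak (tweak π t c) t c = π := by
  rcases t with ⟨a, b⟩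
  funext i
  rcases eq_or_ne i a with rfl | hi
  · have hc' : c⁻¹ * c⁻¹ = 1 := by rw [← mul_inv_rev, hc, inv_one]
    cases b <;>
      simp [tweak, Function.update_self, mul_assoc, hc, hc'] <;>
      simp [← mul_assoc, hc, hc']
  · simp [tweak, Function.update_of_ne hi]

/-- Key lemma: tweaking the letter at step `j` by a swap of `x^j` with a fresh point `y`
does not change the trajectory points `x^0, …, x^{j-1}`. -/
lemma traj_tweak_lt {j : ℕ} (hj1 : 1 ≤ j) (hjk : j ≤ w.toWord.length)
    (hlt : w.toWord.length - j < w.toWord.length)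
    (hInj : ∀ a < j, ∀ b < j, traj π w x a = traj π w x b → a = b)
    {y : Fin n} (hy : ∀ m < j, traj π w x m ≠ y) :
    ∀ m < j, traj (tweak π (w.toWord[w.toWord.length - j]'hlt)
        (Equiv.swap (traj π w x j) y)) w x m = traj π w x m := by
  set t : Fin d × Bool := w.toWord[w.toWord.length - j]'hlt with ht
  set c : Equiv.Perm (Fin n) := Equiv.swap (traj π w x j) y with hc
  set π' := tweak π t c with hπ'
  have hstepj : traj π w x j = letterPerm π t (traj π w x (j-1)) :=
    traj_succ' π w x hj1 hjk
  intro m hm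
  induction m with
  | zero => rw [traj_zero, traj_zero]
  | succ m ih =>
    have hm' : m < j := by omega
    have ihm := ih hm'
    have hmk : m < w.toWord.length := by omega
    set s : Fin d × Bool := w.toWord[w.toWord.length - (m+1)]'(by omega) with hs
    have hstep : traj π w x (m+1) = letterPerm π s (traj π w x m) :=
      traj_succ π w x hmk
    have hstep' : traj π' w x (m+1) = letterPerm π' s (traj π' w x m) :=
      traj_succ π' w x hmk
    rw [hstep', ihm, hstep]
    -- compare letters s and t
    rcases eq_or_ne s.1 t.1 with h1 | h1
    · rcases eq_or_ne s.2 t.2 with h2 | h2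
      · -- s = t : same letter
        have hst : s = t := Prod.ext h1 h2
        rw [hst] at hstep
        rw [hst, hπ', letterPerm_tweak_self, Equiv.Perm.mul_apply, ← hstep]
        -- need swap fixes x^{m+1}
        apply Equiv.swap_apply_of_ne_of_ne
        · -- x^{m+1} ≠ x^j
          intro hcoll
          rw [hstep, hstepj] at hcoll
          have h3 := (letterPerm π t).injective hcoll
          have : m = j - 1 := hInj m hm' (j-1) (by omega) h3
          omega
        · exact hy (m+1) hm
      · -- s = (t.1, !t.2) : inverse letter
        have hst : s = (t.1, !t.2) := by
          rcases s with ⟨s1, s2⟩; rcases t with ⟨t1, t2⟩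
          simp only at h1 h2 ⊢
          rw [h1]
          cases s2 <;> cases t2 <;> simp_all
        -- adjacency: positions length - (m+1) and length - j
        -- we will show m+1 = j-1 leads to contradiction with reducedness,
        -- and otherwise x^m ≠ x^j so the swap does nothing.
        rw [hst, hπ', letterPerm_tweak_flip]
        have hflip : letterPerm π s = (letterPerm π t)⁻¹ := by
          rw [hst]
          rcases t with ⟨t1, t2⟩
          cases t2 <;> simp [letterPerm]
        have hfix : Equiv.swap (traj π w x j) y (traj π w x m) = traj π w x m := by
          apply Equiv.swap_apply_of_ne_of_ne
          · -- x^m ≠ x^j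
            intro hcoll
            -- then x^{m+1} = s(x^m) = t⁻¹(x^j) = x^{j-1}
            have h1' : traj π w x (m+1) = traj π w x (j-1) := by
              rw [hstep, hcoll, hflip, hstepj, ← Equiv.Perm.mul_apply, inv_mul_cancel, Equiv.Perm.one_apply]
            have hm1 : m + 1 = j - 1 := hInj (m+1) hm (j-1) (by omega) h1'
            -- adjacent letters: s at position length-(m+1) = length-j+1
            have hpos : w.toWord.length - (m+1) = (w.toWord.length - j) + 1 := by omega
            apply no_inv_pair w (p := w.toWord.length - j) (by omega)
            have : s = w.toWord[(w.toWord.length - j) + 1]'(by omega) := by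
              rw [hs]; congr 1
            rw [← this, ← ht, hst]
          · exact hy m hm'
        have hfix' : c⁻¹ (traj π w x m) = traj π w x m := by
          rw [hc, Equiv.swap_inv]; exact hfix
        rw [Equiv.Perm.mul_apply, hfix', ← hst, hflip]
    · rw [hπ', letterPerm_tweak_other _ _ _ _ h1]

lemma traj_tweak_j {j : ℕ} (hj1 : 1 ≤ j) (hjk : j ≤ w.toWord.length)
    (hlt : w.toWord.length - j < w.toWord.length)
    (hInj : ∀ a < j, ∀ b < j, traj π w x a = traj π w x b → a = b)
    {y : Fin n} (hy : ∀ m < j, traj π w x m ≠ y) :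
    traj (tweak π (w.toWord[w.toWord.length - j]'hlt)
        (Equiv.swap (traj π w x j) y)) w x j = y := by
  set t : Fin d × Bool := w.toWord[w.toWord.length - j]'hlt with ht
  set c : Equiv.Perm (Fin n) := Equiv.swap (traj π w x j) y with hc
  set π' := tweak π t c with hπ'
  have h1 : traj π' w x j = letterPerm π' t (traj π' w x (j-1)) :=
    traj_succ' π' w x hj1 hjk
  have h2 : traj π' w x (j-1) = traj π w x (j-1) :=
    traj_tweak_lt π w x hj1 hjk hlt hInj hy (j-1) (by omega)
  rw [h1, h2, hπ', letterPerm_tweak_self, Equiv.Perm.mul_apply,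
    ← traj_succ' π w x hj1 hjk, hc, Equiv.swap_apply_left]

/-- Counting: the number of tuples whose trajectory prefix is injective but collides
at step `j`, times `n - j`, is at most (number of all tuples) times `j`. -/
lemma card_B_mul_le (w : FreeGroup (Fin d)) (x : Fin n) {j : ℕ}
    (hj1 : 1 ≤ j) (hjk : j ≤ w.toWord.length) (hn : j ≤ n) :
    (Finset.univ.filter (fun π : Fin d → Equiv.Perm (Fin n) =>
      (∀ a < j, ∀ b < j, traj π w x a = traj π w x b → a = b) ∧
      ∃ i < j, traj π w x j = traj π w x i)).card * (n - j) ≤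
    Fintype.card (Fin d → Equiv.Perm (Fin n)) * j := by
  classical
  have hlt : w.toWord.length - j < w.toWord.length := by omega
  set B := Finset.univ.filter (fun π : Fin d → Equiv.Perm (Fin n) =>
      (∀ a < j, ∀ b < j, traj π w x a = traj π w x b → a = b) ∧
      ∃ i < j, traj π w x j = traj π w x i) with hB
  set D := B.sigma (fun π => Finset.univ.filter
      (fun y : Fin n => ∀ m < j, traj π w x m ≠ y)) with hD
  -- cardinality of D
  have hterm : ∀ π ∈ B, (Finset.univ.filter
      (fun y : Fin n => ∀ m < j, traj π w x m ≠ y)).card = n - j := by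
    intro π hπ
    have hInj := (Finset.mem_filter.mp hπ).2.1
    have himg : (Finset.image (fun m => traj π w x m) (Finset.range j)).card = j := by
      rw [Finset.card_image_of_injOn, Finset.card_range]
      intro a ha b hb hab
      exact hInj a (Finset.mem_range.mp ha) b (Finset.mem_range.mp hb) hab
    have hset : Finset.univ.filter (fun y : Fin n => ∀ m < j, traj π w x m ≠ y) =
        Finset.univ \ Finset.image (fun m => traj π w x m) (Finset.range j) := by
      ext y
      simp only [Finset.mem_filter, Finset.mem_univ, true_and, Finset.mem_sdiff,
        Finset.mem_image, Finset.mem_range, not_exists, not_and]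
    rw [hset, Finset.card_sdiff_of_subset (Finset.subset_univ _), himg, Finset.card_univ,
      Fintype.card_fin]
  have hcardD : D.card = B.card * (n - j) := by
    rw [hD, Finset.card_sigma, Finset.sum_congr rfl hterm, Finset.sum_const,
      smul_eq_mul]
  -- the injection
  have hinj : D.card ≤ (Finset.univ ×ˢ Finset.range j :
      Finset ((Fin d → Equiv.Perm (Fin n)) × ℕ)).card := by
    apply Finset.card_le_card_of_injOn (fun p =>
      (tweak p.1 (w.toWord[w.toWord.length - j]'hlt)
        (Equiv.swap (traj p.1 w x j) p.2),
       sInf {i | i < j ∧ traj p.1 w x j = traj p.1 w x i}))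
    · intro p hp
      have hp' := Finset.mem_sigma.mp hp
      have hπB := hp'.1
      obtain ⟨hInj, hcoll⟩ := (Finset.mem_filter.mp hπB).2
      have hSne : {i | i < j ∧ traj p.1 w x j = traj p.1 w x i}.Nonempty := by
        obtain ⟨i, hi, hti⟩ := hcoll; exact ⟨i, hi, hti⟩
      have := Nat.sInf_mem hSne
      simp only [Finset.mem_coe, Finset.mem_product, Finset.mem_univ, Finset.mem_range, true_and]
      exact this.1
    · intro p hp q hq heq
      -- unpack memberships
      have hp' := Finset.mem_sigma.mp hp
      have hq' := Finset.mem_sigma.mp hq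
      obtain ⟨hInjp, hcollp⟩ := (Finset.mem_filter.mp hp'.1).2
      obtain ⟨hInjq, hcollq⟩ := (Finset.mem_filter.mp hq'.1).2
      have hyp : ∀ m < j, traj p.1 w x m ≠ p.2 := by
        have := (Finset.mem_filter.mp hp'.2).2; exact this
      have hyq : ∀ m < j, traj q.1 w x m ≠ q.2 := by
        have := (Finset.mem_filter.mp hq'.2).2; exact this
      have hSnep : {i | i < j ∧ traj p.1 w x j = traj p.1 w x i}.Nonempty := by
        obtain ⟨i, hi, hti⟩ := hcollp; exact ⟨i, hi, hti⟩
      have hSneq : {i | i < j ∧ traj q.1 w x j = traj q.1 w x i}.Nonempty := by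
        obtain ⟨i, hi, hti⟩ := hcollq; exact ⟨i, hi, hti⟩
      have hip := Nat.sInf_mem hSnep
      have hiq := Nat.sInf_mem hSneq
      have h1 := congrArg Prod.fst heq
      have h2 := congrArg Prod.snd heq
      simp only at h1 h2
      -- common tweaked tuple and index
      set t := w.toWord[w.toWord.length - j]'hlt with htdef
      set i := sInf {i | i < j ∧ traj p.1 w x j = traj p.1 w x i} with hi
      rw [← h2] at hiq
      set cp := Equiv.swap (traj p.1 w x j) p.2 with hcp
      set cq := Equiv.swap (traj q.1 w x j) q.2 with hcq
      set π'' := tweak p.1 t cp with hπ''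
      have h1' : tweak q.1 t cq = π'' := h1.symm
      have hprevp := traj_tweak_lt p.1 w x hj1 hjk hlt hInjp hyp
      have hprevq := traj_tweak_lt q.1 w x hj1 hjk hlt hInjq hyq
      have hjp : traj π'' w x j = p.2 := traj_tweak_j p.1 w x hj1 hjk hlt hInjp hyp
      have hjq : traj π'' w x j = q.2 := by
        rw [← h1']; exact traj_tweak_j q.1 w x hj1 hjk hlt hInjq hyq
      have hyy : p.2 = q.2 := by rw [← hjp, hjq]
      have hprevp_i : traj π'' w x i = traj p.1 w x i := hprevp i hip.1
      have hprevq_i : traj π'' w x i = traj q.1 w x i := by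
        rw [← h1']; exact hprevq i hiq.1
      have hcpeq : cp = Equiv.swap (traj π'' w x i) (traj π'' w x j) := by
        rw [hprevp_i, hjp, ← hip.2]
      have hcqeq : cq = Equiv.swap (traj π'' w x i) (traj π'' w x j) := by
        rw [hprevq_i, hjq, ← hiq.2]
      have hcc : cp = cq := hcpeq.trans hcqeq.symm
      have e1 : tweak (tweak p.1 t cp) t cp = p.1 :=
        tweak_tweak _ _ _ (by rw [hcp]; exact Equiv.swap_mul_self _ _)
      have e2 : tweak (tweak q.1 t cq) t cq = q.1 :=
        tweak_tweak _ _ _ (by rw [hcq]; exact Equiv.swap_mul_self _ _)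
      have hp1 : p.1 = q.1 := by
        rw [← e1, ← e2, h1', ← hπ'', hcc]
      exact Sigma.ext hp1 (heq_of_eq hyy)
  -- combine
  have hprod : (Finset.univ ×ˢ Finset.range j :
      Finset ((Fin d → Equiv.Perm (Fin n)) × ℕ)).card =
      Fintype.card (Fin d → Equiv.Perm (Fin n)) * j := by
    rw [Finset.card_product, Finset.card_univ, Finset.card_range]
  calc B.card * (n - j) = D.card := hcardD.symm
    _ ≤ _ := hinj
    _ = _ := hprod

theorem prob_trajectory_not_injective' {n d k : ℕ} (hd : 1 ≤ d)
    (w : FreeGroup (Fin d)) (hw : w ≠ 1) (hk : FreeGroup.norm w = k)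
    (hk0 : 0 < k) (hkn : k < n) (x : Fin n) :
    (((Finset.univ.filter (fun π : Fin d → Equiv.Perm (Fin n) =>
        ¬ Function.Injective (fun j : Fin (k + 1) => traj π w x (j : ℕ)))).card : ℝ) /
      (Fintype.card (Fin d → Equiv.Perm (Fin n)) : ℝ)) ≤
      (k : ℝ) ^ 2 / ((n : ℝ) - (k : ℝ)) := by
  classical
  have hkw : w.toWord.length = k := hk
  set N := Fintype.card (Fin d → Equiv.Perm (Fin n)) with hN
  set Bf : ℕ → Finset (Fin d → Equiv.Perm (Fin n)) := fun j =>
    Finset.univ.filter (fun π =>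
      (∀ a < j, ∀ b < j, traj π w x a = traj π w x b → a = b) ∧
      ∃ i < j, traj π w x j = traj π w x i) with hBf
  -- covering by first-collision events
  have hcover : (Finset.univ.filter (fun π : Fin d → Equiv.Perm (Fin n) =>
      ¬ Function.Injective (fun j : Fin (k + 1) => traj π w x (j : ℕ)))) ⊆
      (Finset.Icc 1 k).biUnion Bf := by
    intro π hπ
    have hπ' : ¬ Function.Injective (fun j : Fin (k + 1) => traj π w x (j : ℕ)) :=
      (Finset.mem_filter.mp hπ).2
    rw [Function.not_injective_iff] at hπ'
    obtain ⟨a, b, hab, hne⟩ := hπ'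
    have hne' : (a : ℕ) ≠ (b : ℕ) := fun h => hne (Fin.ext h)
    set S : Set ℕ := {q | q ≤ k ∧ ∃ p < q, traj π w x p = traj π w x q} with hS
    have hSne : S.Nonempty := by
      rcases lt_or_gt_of_ne hne' with h | h
      · exact ⟨b, by omega, ⟨a, h, hab⟩⟩
      · exact ⟨a, by omega, ⟨b, h, hab.symm⟩⟩
    have hmem := Nat.sInf_mem hSne
    obtain ⟨hjk', p0, hp0, hpeq⟩ := hmem
    rw [Finset.mem_biUnion]
    refine ⟨sInf S, Finset.mem_Icc.mpr ⟨by omega, hjk'⟩, ?_⟩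
    rw [hBf]
    simp only [Finset.mem_filter, Finset.mem_univ, true_and]
    constructor
    · intro a' ha' b' hb' heq'
      by_contra hne''
      rcases Nat.lt_or_ge a' b' with h | h
      · have : b' ∈ S := ⟨by omega, ⟨a', h, heq'⟩⟩
        exact absurd (Nat.sInf_le this) (by omega)
      · have hlt : b' < a' := by omega
        have : a' ∈ S := ⟨by omega, ⟨b', hlt, heq'.symm⟩⟩
        exact absurd (Nat.sInf_le this) (by omega)
    · exact ⟨p0, hp0, hpeq.symm⟩
  -- per-event cardinality bound
  have hcardB : ∀ j ∈ Finset.Icc 1 k, (Bf j).card * (n - k) ≤ N * k := by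
    intro j hj
    obtain ⟨hj1, hj2⟩ := Finset.mem_Icc.mp hj
    calc (Bf j).card * (n - k) ≤ (Bf j).card * (n - j) :=
          Nat.mul_le_mul_left _ (by omega)
      _ ≤ N * j := card_B_mul_le w x hj1 (by omega) (by omega)
      _ ≤ N * k := Nat.mul_le_mul_left _ hj2
  -- total bound
  have hEcard : (Finset.univ.filter (fun π : Fin d → Equiv.Perm (Fin n) =>
      ¬ Function.Injective (fun j : Fin (k + 1) => traj π w x (j : ℕ)))).card * (n - k)
      ≤ N * k * k := by
    calc _ ≤ ((Finset.Icc 1 k).biUnion Bf).card * (n - k) :=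
          Nat.mul_le_mul_right _ (Finset.card_le_card hcover)
      _ ≤ (∑ j ∈ Finset.Icc 1 k, (Bf j).card) * (n - k) :=
          Nat.mul_le_mul_right _ Finset.card_biUnion_le
      _ = ∑ j ∈ Finset.Icc 1 k, ((Bf j).card * (n - k)) := Finset.sum_mul ..
      _ ≤ ∑ _j ∈ Finset.Icc 1 k, N * k := Finset.sum_le_sum hcardB
      _ = (Finset.Icc 1 k).card * (N * k) := by rw [Finset.sum_const, smul_eq_mul]
      _ = k * (N * k) := by rw [Nat.card_Icc]; norm_num
      _ = N * k * k := by ring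
  -- pass to real numbers
  have hNpos : (0 : ℝ) < (N : ℝ) := by
    exact_mod_cast Fintype.card_pos
  have hnk : (0 : ℝ) < (n : ℝ) - (k : ℝ) := by
    have : (k : ℝ) < (n : ℝ) := by exact_mod_cast hkn
    linarith
  rw [div_le_div_iff₀ hNpos hnk]
  have hcast : ((n - k : ℕ) : ℝ) = (n : ℝ) - (k : ℝ) := by
    rw [Nat.cast_sub hkn.le]
  have := hEcard
  have hreal : ((Finset.univ.filter (fun π : Fin d → Equiv.Perm (Fin n) =>
      ¬ Function.Injective (fun j : Fin (k + 1) => traj π w x (j : ℕ)))).card : ℝ) *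
      ((n : ℝ) - (k : ℝ)) ≤ (N : ℝ) * k * k := by
    rw [← hcast]
    exact_mod_cast hEcard
  nlinarith [hreal]

theorem prob_trajectory_not_injective {n d k : ℕ} (hd : 1 ≤ d)
    (w : FreeGroup (Fin d)) (hw : w ≠ 1) (hk : FreeGroup.norm w = k)
    (hk0 : 0 < k) (hkn : k < n) (x : Fin n) :
    probTuple n d (fun π =>
        ¬ Function.Injective (fun j : Fin (k + 1) => traj π w x (j : ℕ))) ≤
      (k : ℝ) ^ 2 / ((n : ℝ) - (k : ℝ)) := by
  unfold probTuple
  have h := prob_trajectory_not_injective' hd w hw hk hk0 hkn x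
  convert h using 4
  exact Finset.filter_congr_decidable _ _ _
end
end

section
/- Let d ≥ 1, let w ∈ F_d be a nontrivial word of length k with 0 < k < n, and fix a point x ∈ {1, …, n}. Then the probability, over π_1, …, π_d chosen independently and uniformly at random from S_n, that the permutation w(π_1, …, π_d) fixes x is at most k² / (n − k). -/
open Classical Filter

namespace BroderShamir

open Equiv Finset

variable {n d : ℕ}

/-- Tuples of permutations. -/
abbrev Tup (n d : ℕ) := Fin d → Equiv.Perm (Fin n)

/-- Formal inverse of a letter. -/
def linv (ℓ : Fin d × Bool) : Fin d × Bool := (ℓ.1, !ℓ.2)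

lemma linv_linv (ℓ : Fin d × Bool) : linv (linv ℓ) = ℓ := by simp [linv]

/-- The permutation associated to a letter. -/
def Pm (π : Tup n d) (ℓ : Fin d × Bool) : Equiv.Perm (Fin n) :=
  cond ℓ.2 (π ℓ.1) (π ℓ.1)⁻¹

/-- Application of a letter to a point. -/
def app (π : Tup n d) (ℓ : Fin d × Bool) (y : Fin n) : Fin n := Pm π ℓ y

lemma app_linv (π : Tup n d) (ℓ : Fin d × Bool) (y : Fin n) :
    app π (linv ℓ) y = (Pm π ℓ)⁻¹ y := by
  cases hb : ℓ.2 <;> simp [app, Pm, linv, hb]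

/-- The trajectory of `x` under successive application of the letters `m 0, m 1, …`. -/
def traj (x : Fin n) (m : ℕ → Fin d × Bool) (π : Tup n d) : ℕ → Fin n
  | 0 => x
  | (j+1) => app π (m j) (traj x m π j)

@[simp] lemma traj_zero (x : Fin n) (m : ℕ → Fin d × Bool) (π : Tup n d) :
    traj x m π 0 = x := rfl

lemma traj_succ (x : Fin n) (m : ℕ → Fin d × Bool) (π : Tup n d) (j : ℕ) :
    traj x m π (j+1) = app π (m j) (traj x m π j) := rfl

/-- Step `j` (from `traj j` to `traj (j+1)`, using letter `m j`) is *free*: the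
corresponding constraint on the permutation was not revealed by any earlier step. -/
def Free (x : Fin n) (m : ℕ → Fin d × Bool) (π : Tup n d) (j : ℕ) : Prop :=
  ∀ t, t < j → ¬(m t = m j ∧ traj x m π t = traj x m π j) ∧
    ¬(m t = linv (m j) ∧ traj x m π (t+1) = traj x m π j)

/-- The deterministic lemma: if every free step lands on a fresh vertex, then the
whole trajectory is injective. -/
lemma traj_injective (x : Fin n) (m : ℕ → Fin d × Bool) (π : Tup n d) (k : ℕ)
    (hred : ∀ t, t + 1 < k → m (t+1) ≠ linv (m t))
    (h : ∀ j, j < k → Free x m π j → ∀ t, t ≤ j → traj x m π (j+1) ≠ traj x m π t) :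
    ∀ j, j ≤ k → ∀ b, b ≤ j → ∀ a, a < b → traj x m π a ≠ traj x m π b := by
  intro j
  induction j with
  | zero => intro _ b hb a hab; omega
  | succ j IH =>
    intro hjk b hb a hab
    rcases Nat.lt_or_ge b (j+1) with hb' | hb'
    · exact IH (by omega) b (by omega) a hab
    · have hbj : b = j + 1 := by omega
      subst hbj
      have hjltk : j < k := by omega
      have hfree : Free x m π j := by
        intro t ht
        constructor
        · rintro ⟨hm, htr⟩
          exact IH (by omega) j le_rfl t ht htr
        · rintro ⟨hm, htr⟩
          rcases Nat.lt_or_ge (t+1) j with h1 | h1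
          · exact IH (by omega) j le_rfl (t+1) h1 htr
          · have ht1 : t + 1 = j := by omega
            apply hred t (by omega)
            rw [ht1, hm, linv_linv]
      exact fun hEq => h j hjltk hfree a (by omega) hEq.symm

section Counting

variable (x : Fin n) (m : ℕ → Fin d × Bool) (j : ℕ)

/-- The set of points revealed as images (on the `(m j)`-side) by the first `j` steps. -/
def RevImg (π : Tup n d) : Finset (Fin n) :=
  ((Finset.range j).filter (fun t => m t = m j ∨ m t = linv (m j))).image
    (fun t => if m t = m j then traj x m π (t+1) else traj x m π t)

lemma card_RevImg_le (π : Tup n d) : (RevImg x m j π).card ≤ j :=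
  le_trans Finset.card_image_le (le_trans (Finset.card_filter_le _ _)
    (le_of_eq (Finset.card_range j)))

lemma vj_not_mem_RevImg (π : Tup n d) (hfree : Free x m π j) :
    traj x m π (j+1) ∉ RevImg x m j π := by
  intro hmem
  simp only [RevImg, Finset.mem_image, Finset.mem_filter, Finset.mem_range] at hmem
  obtain ⟨t, ⟨ht, hor⟩, hval⟩ := hmem
  by_cases hm : m t = m j
  · rw [if_pos hm] at hval
    have h1 : traj x m π (t+1) = Pm π (m j) (traj x m π t) := by
      rw [traj_succ, hm]; rfl
    have h2 : traj x m π (j+1) = Pm π (m j) (traj x m π j) := rfl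
    have : traj x m π t = traj x m π j :=
      (Pm π (m j)).injective (by rw [← h1, ← h2, hval])
    exact (hfree t ht).1 ⟨hm, this⟩
  · rw [if_neg hm] at hval
    have hm' : m t = linv (m j) := hor.resolve_left hm
    have h1 : traj x m π (t+1) = (Pm π (m j))⁻¹ (traj x m π t) := by
      rw [traj_succ, hm', app_linv]
    have h2 : traj x m π (j+1) = Pm π (m j) (traj x m π j) := rfl
    have : traj x m π (t+1) = traj x m π j := by
      rw [h1, hval, h2]; exact (Pm π (m j)).symm_apply_apply _
    exact (hfree t ht).2 ⟨hm', this⟩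

/-- The resampling map: change the value of the step-`j` constraint to `c`. -/
def Tm (c : Fin n) (π : Tup n d) : Tup n d :=
  Function.update π (m j).1
    (cond (m j).2 (Equiv.swap (traj x m π (j+1)) c * π (m j).1)
      (π (m j).1 * Equiv.swap (traj x m π (j+1)) c))

lemma Pm_Tm (c : Fin n) (π : Tup n d) :
    Pm (Tm x m j c π) (m j) = Equiv.swap (traj x m π (j+1)) c * Pm π (m j) := by
  cases hb : (m j).2 <;>
    simp [Pm, Tm, hb, Function.update_self, mul_inv_rev, Equiv.swap_inv]

lemma Pm_Tm_other (c : Fin n) (π : Tup n d) (ℓ : Fin d × Bool) (hi : ℓ.1 ≠ (m j).1) :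
    Pm (Tm x m j c π) ℓ = Pm π ℓ := by
  simp [Pm, Tm, Function.update_of_ne hi]

lemma traj_Tm (π : Tup n d) (c : Fin n) (hfree : Free x m π j)
    (hc : c ∉ RevImg x m j π) :
    ∀ t, t ≤ j → traj x m (Tm x m j c π) t = traj x m π t := by
  have hv : traj x m π (j+1) ∉ RevImg x m j π := vj_not_mem_RevImg x m j π hfree
  intro t
  induction t with
  | zero => intro _; rfl
  | succ t IH =>
    intro ht
    have ht' : t < j := by omega
    rw [traj_succ, traj_succ, IH (by omega)]
    by_cases hi : (m t).1 = (m j).1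
    · by_cases hm : m t = m j
      · rw [hm]
        show Pm (Tm x m j c π) (m j) _ = Pm π (m j) _
        rw [Pm_Tm, Equiv.Perm.mul_apply]
        have hval : Pm π (m j) (traj x m π t) = traj x m π (t+1) := by
          rw [traj_succ, hm]; rfl
        rw [hval]
        have hmem : traj x m π (t+1) ∈ RevImg x m j π := by
          simp only [RevImg, Finset.mem_image, Finset.mem_filter, Finset.mem_range]
          exact ⟨t, ⟨ht', Or.inl hm⟩, if_pos hm⟩
        exact Equiv.swap_apply_of_ne_of_ne
          (fun hEq => hv (by rw [hEq] at hmem; exact hmem))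
          (fun hEq => hc (by rw [hEq] at hmem; exact hmem))
      · have hb : (m t).2 = !(m j).2 := by
          rcases Prod.mk.eta (p := m t) ▸ Prod.mk.eta (p := m j) ▸ hm with hm'
          cases h1 : (m t).2 <;> cases h2 : (m j).2 <;> simp_all [Prod.ext_iff]
        have hm' : m t = linv (m j) := by
          rw [← Prod.mk.eta (p := m t), linv, hi, hb]
        rw [hm']
        show app (Tm x m j c π) (linv (m j)) _ = app π (linv (m j)) _
        rw [app_linv, app_linv, Pm_Tm, mul_inv_rev, Equiv.swap_inv,
          Equiv.Perm.mul_apply]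
        have hmtne : ¬ m t = m j := hm
        have hmem : traj x m π t ∈ RevImg x m j π := by
          simp only [RevImg, Finset.mem_image, Finset.mem_filter, Finset.mem_range]
          exact ⟨t, ⟨ht', Or.inr hm'⟩, if_neg hmtne⟩
        rw [Equiv.swap_apply_of_ne_of_ne
          (fun hEq => hv (by rw [hEq] at hmem; exact hmem))
          (fun hEq => hc (by rw [hEq] at hmem; exact hmem))]
    · show Pm (Tm x m j c π) (m t) _ = Pm π (m t) _
      rw [Pm_Tm_other x m j c π (m t) hi]

lemma traj_Tm_succ (π : Tup n d) (c : Fin n) (hfree : Free x m π j)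
    (hc : c ∉ RevImg x m j π) :
    traj x m (Tm x m j c π) (j+1) = c := by
  rw [traj_succ, traj_Tm x m j π c hfree hc j le_rfl]
  show Pm (Tm x m j c π) (m j) _ = c
  rw [Pm_Tm, Equiv.Perm.mul_apply]
  have hval : Pm π (m j) (traj x m π j) = traj x m π (j+1) := rfl
  rw [hval, Equiv.swap_apply_left]

lemma Free_Tm (π : Tup n d) (c : Fin n) (hfree : Free x m π j)
    (hc : c ∉ RevImg x m j π) : Free x m (Tm x m j c π) j := by
  intro t ht
  rw [traj_Tm x m j π c hfree hc t (by omega),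
    traj_Tm x m j π c hfree hc (t+1) (by omega),
    traj_Tm x m j π c hfree hc j le_rfl]
  exact hfree t ht

lemma Vis_Tm (π : Tup n d) (c : Fin n) (hfree : Free x m π j)
    (hc : c ∉ RevImg x m j π) :
    (Finset.range (j+1)).image (traj x m (Tm x m j c π)) =
      (Finset.range (j+1)).image (traj x m π) := by
  apply Finset.image_congr
  intro t ht
  have ht' : t < j + 1 := by simpa using ht
  exact traj_Tm x m j π c hfree hc t (by omega)

lemma Tm_Tm (π : Tup n d) (c : Fin n) (hfree : Free x m π j)
    (hc : c ∉ RevImg x m j π) :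
    Tm x m j (traj x m π (j+1)) (Tm x m j c π) = π := by
  have hv' : traj x m (Tm x m j c π) (j+1) = c := traj_Tm_succ x m j π c hfree hc
  funext i'
  by_cases hi : i' = (m j).1
  · subst hi
    simp only [Tm] at hv' ⊢
    cases hb : (m j).2 <;> simp only [hb, cond_false, cond_true] at hv' ⊢ <;>
        rw [Function.update_self, Function.update_self, hv']
    · rw [Equiv.swap_comm c (traj x m π (j+1)), mul_assoc, Equiv.swap_mul_self, mul_one]
    · rw [Equiv.swap_comm c (traj x m π (j+1)), ← mul_assoc (Equiv.swap _ _),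
        Equiv.swap_mul_self, one_mul]
  · simp [Tm, Function.update_of_ne hi]

/-- The central counting bound for a single step. -/
lemma card_bound :
    (n - j) * (Finset.univ.filter (fun π : Tup n d =>
        Free x m π j ∧ traj x m π (j+1) ∈ (Finset.range (j+1)).image (traj x m π))).card ≤
      (j + 1) * Fintype.card (Tup n d) := by
  classical
  set C : Finset (Tup n d) := Finset.univ.filter (fun π : Tup n d =>
      Free x m π j ∧ traj x m π (j+1) ∈ (Finset.range (j+1)).image (traj x m π)) with hC
  set F : Finset (Tup n d) := Finset.univ.filter (fun π : Tup n d => Free x m π j) with hF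
  set SC : Finset (Tup n d × Fin n) :=
    C.biUnion (fun π => ({π} : Finset (Tup n d)) ×ˢ ((Finset.univ : Finset (Fin n)) \ RevImg x m j π)) with hSC
  set TS : Finset (Tup n d × Fin n) :=
    F.biUnion (fun π => ({π} : Finset (Tup n d)) ×ˢ (Finset.range (j+1)).image (traj x m π)) with hTS
  have memSC : ∀ q : Tup n d × Fin n, q ∈ SC ↔ q.1 ∈ C ∧ q.2 ∉ RevImg x m j q.1 := by
    intro q
    constructor
    · intro h
      obtain ⟨π, hπ, hq⟩ := Finset.mem_biUnion.mp h
      obtain ⟨h1, h2⟩ := Finset.mem_product.mp hq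
      have hq1 : q.1 = π := Finset.mem_singleton.mp h1
      rw [hq1]
      exact ⟨hπ, (Finset.mem_sdiff.mp h2).2⟩
    · rintro ⟨h1, h2⟩
      exact Finset.mem_biUnion.mpr ⟨q.1, h1, Finset.mem_product.mpr
        ⟨Finset.mem_singleton_self _, Finset.mem_sdiff.mpr ⟨Finset.mem_univ _, h2⟩⟩⟩
  have h1 : (n - j) * C.card ≤ SC.card := by
    have hdisj : ∀ a ∈ C, ∀ b ∈ C, a ≠ b → Disjoint
        (({a} : Finset (Tup n d)) ×ˢ ((Finset.univ : Finset (Fin n)) \ RevImg x m j a))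
        (({b} : Finset (Tup n d)) ×ˢ ((Finset.univ : Finset (Fin n)) \ RevImg x m j b)) := by
      intro a _ b _ hab
      rw [Finset.disjoint_left]
      rintro ⟨q1, q2⟩ hq hq'
      simp only [Finset.mem_product, Finset.mem_singleton] at hq hq'
      exact hab (hq.1 ▸ hq'.1 ▸ rfl)
    rw [hSC, Finset.card_biUnion hdisj]
    have : ∀ π ∈ C, n - j ≤
        (({π} : Finset (Tup n d)) ×ˢ ((Finset.univ : Finset (Fin n)) \ RevImg x m j π)).card := by
      intro π _
      rw [Finset.card_product, Finset.card_singleton, one_mul,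
        Finset.card_sdiff_of_subset (Finset.subset_univ _), Finset.card_univ, Fintype.card_fin]
      exact Nat.sub_le_sub_left (card_RevImg_le x m j π) n
    calc (n - j) * C.card = ∑ _π ∈ C, (n - j) := by
          rw [Finset.sum_const, smul_eq_mul, mul_comm]
      _ ≤ _ := Finset.sum_le_sum this
  have h2 : SC.card ≤ TS.card := by
    apply Finset.card_le_card_of_injOn
      (fun q => (Tm x m j q.2 q.1, traj x m q.1 (j+1)))
    · intro q hq
      rw [Finset.mem_coe, memSC] at hq
      obtain ⟨hqC, hqc⟩ := hq
      rw [hC, Finset.mem_filter] at hqC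
      obtain ⟨-, hfree, hvmem⟩ := hqC
      simp only [Finset.mem_coe, hTS, Finset.mem_biUnion]
      refine ⟨Tm x m j q.2 q.1, ?_, ?_⟩
      · rw [hF, Finset.mem_filter]
        exact ⟨Finset.mem_univ _, Free_Tm x m j q.1 q.2 hfree hqc⟩
      · exact Finset.mem_product.mpr ⟨Finset.mem_singleton_self _,
          by rw [Vis_Tm x m j q.1 q.2 hfree hqc]; exact hvmem⟩
    · intro q hq q' hq' hEq
      rw [Finset.mem_coe, memSC] at hq hq'
      obtain ⟨hqC, hqc⟩ := hq
      obtain ⟨hqC', hqc'⟩ := hq'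
      rw [hC, Finset.mem_filter] at hqC hqC'
      have hfree := hqC.2.1
      have hfree' := hqC'.2.1
      have e1 : (fun r : Tup n d × Fin n => (Tm x m j r.2 r.1, traj x m r.1 (j+1)))
          ((fun q : Tup n d × Fin n => (Tm x m j q.2 q.1, traj x m q.1 (j+1))) q) = q := by
        simp only
        rw [Tm_Tm x m j q.1 q.2 hfree hqc, traj_Tm_succ x m j q.1 q.2 hfree hqc]
      have e2 : (fun r : Tup n d × Fin n => (Tm x m j r.2 r.1, traj x m r.1 (j+1)))
          ((fun q : Tup n d × Fin n => (Tm x m j q.2 q.1, traj x m q.1 (j+1))) q') = q' := by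
        simp only
        rw [Tm_Tm x m j q'.1 q'.2 hfree' hqc', traj_Tm_succ x m j q'.1 q'.2 hfree' hqc']
      rw [← e1, ← e2, hEq]
  have h3 : TS.card ≤ (j + 1) * Fintype.card (Tup n d) := by
    calc TS.card ≤ ∑ π ∈ F, (({π} : Finset (Tup n d)) ×ˢ
          (Finset.range (j+1)).image (traj x m π)).card := Finset.card_biUnion_le
      _ ≤ ∑ _π ∈ F, (j + 1) := by
          apply Finset.sum_le_sum
          intro π _
          rw [Finset.card_product, Finset.card_singleton, one_mul]
          exact le_trans Finset.card_image_le (le_of_eq (Finset.card_range _))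
      _ = F.card * (j + 1) := by rw [Finset.sum_const, smul_eq_mul]
      _ ≤ Fintype.card (Tup n d) * (j + 1) := by
          apply Nat.mul_le_mul_right
          exact le_trans (Finset.card_filter_le _ _) (le_of_eq Finset.card_univ)
      _ = (j + 1) * Fintype.card (Tup n d) := mul_comm _ _
  omega

end Counting

/-- Evaluation of a word product as a trajectory. -/
lemma prod_apply_eq_traj (π : Tup n d) (ℓ₀ : Fin d × Bool) :
    ∀ (L : List (Fin d × Bool)) (m : ℕ → Fin d × Bool),
      (∀ t, t < L.length → m t = L.reverse.getD t ℓ₀) → ∀ y : Fin n,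
      (L.map (fun ℓ => (cond ℓ.2 (π ℓ.1) (π ℓ.1)⁻¹ : Equiv.Perm (Fin n)))).prod y =
        traj y m π L.length := by
  intro L
  induction L with
  | nil => intro m _ y; simp
  | cons a L' IH =>
    intro m hm y
    have hm' : ∀ t, t < L'.length → m t = L'.reverse.getD t ℓ₀ := by
      intro t ht
      rw [hm t (by simp; omega)]
      rw [List.reverse_cons, List.getD_append _ _ _ _ (by simpa using ht)]
    have hlast : m L'.length = a := by
      rw [hm L'.length (by simp)]
      rw [List.reverse_cons, List.getD_append_right _ _ _ _ (by simp)]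
      simp
    rw [List.map_cons, List.prod_cons, Equiv.Perm.mul_apply,
      IH m hm' y, List.length_cons, traj_succ, hlast]
    rfl

end BroderShamir

theorem prob_fixed_point_le {n d k : ℕ} (hd : 1 ≤ d)
    (w : FreeGroup (Fin d)) (hw : w ≠ 1) (hk : FreeGroup.norm w = k)
    (hk0 : 0 < k) (hkn : k < n) (x : Fin n) :
    probTuple n d (fun π => FreeGroup.lift π w x = x) ≤
      (k : ℝ) ^ 2 / ((n : ℝ) - (k : ℝ)) := by
  classical
  open BroderShamir Finset in
  -- setup
  have hlen : w.toWord.length = k := hk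
  set ℓ₀ : Fin d × Bool := (⟨0, hd⟩, true) with hℓ₀
  set m : ℕ → Fin d × Bool := fun t => w.toWord.reverse.getD t ℓ₀ with hm
  -- reducedness of the reversed word
  have hred : ∀ t, t + 1 < k → m (t+1) ≠ BroderShamir.linv (m t) := by
    intro t ht hEq
    set R := w.toWord with hR
    have hRlen : R.length = k := hlen
    have hrevlen : R.reverse.length = k := by simp [hRlen]
    set s := k - t - 2 with hs
    have hs2 : s + 2 ≤ k := by omega
    have hidx1 : m (t+1) = R[s]'(by omega) := by
      show R.reverse.getD (t+1) ℓ₀ = _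
      rw [List.getD_eq_getElem _ _ (by omega : t + 1 < R.reverse.length)]
      rw [List.getElem_reverse]
      congr 1
      omega
    have hidx2 : m t = R[s+1]'(by omega) := by
      show R.reverse.getD t ℓ₀ = _
      rw [List.getD_eq_getElem _ _ (by omega : t < R.reverse.length)]
      rw [List.getElem_reverse]
      congr 1
      omega
    have hkey : R[s+1]'(by omega) = BroderShamir.linv (R[s]'(by omega)) := by
      rw [← hidx2, ← hidx1] at *
      rw [hEq, BroderShamir.linv_linv]
    have e1 : R.drop s = R[s]'(by omega) :: R.drop (s+1) :=
      List.drop_eq_getElem_cons (by omega)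
    have e2 : R.drop (s+1) = R[s+1]'(by omega) :: R.drop (s+2) :=
      List.drop_eq_getElem_cons (by omega)
    have e3 : R[s+1]'(by omega) = ((R[s]'(by omega)).1, !(R[s]'(by omega)).2) := by
      rw [hkey]; rfl
    have hsplit : R = R.take s ++ (R[s]'(by omega)) :: (R[s+1]'(by omega)) ::
        R.drop (s+2) := by
      conv_lhs => rw [← List.take_append_drop s R, e1, e2]
    have hsplit2 : R = R.take s ++ ((R[s]'(by omega)).1, (R[s]'(by omega)).2) ::
        ((R[s]'(by omega)).1, !(R[s]'(by omega)).2) :: R.drop (s+2) := by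
      rw [Prod.mk.eta, ← e3]; exact hsplit
    have hred2 : FreeGroup.reduce R = R := by rw [hR]; exact FreeGroup.reduce_toWord w
    exact FreeGroup.reduce.not (L₁ := R) (L₂ := R.take s) (L₃ := R.drop (s+2))
      (x := (R[s]'(by omega)).1) (b := (R[s]'(by omega)).2)
      (by rw [hred2]; exact hsplit2)
  -- evaluation
  have heval : ∀ π : BroderShamir.Tup n d,
      (FreeGroup.lift π) w x = BroderShamir.traj x m π k := by
    intro π
    rw [← FreeGroup.mk_toWord (x := w), FreeGroup.lift_mk]
    have := BroderShamir.prod_apply_eq_traj π ℓ₀ w.toWord m (fun t _ => rfl) x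
    rw [this, hlen]
  -- union bound setup
  set N := Fintype.card (Fin d → Equiv.Perm (Fin n)) with hN
  have hNpos : 0 < N := Fintype.card_pos
  set Cj : ℕ → Finset (BroderShamir.Tup n d) := fun j =>
    Finset.univ.filter (fun π : BroderShamir.Tup n d =>
      BroderShamir.Free x m π j ∧
        BroderShamir.traj x m π (j+1) ∈ (Finset.range (j+1)).image (BroderShamir.traj x m π)) with hCj
  have hsub : (Finset.univ.filter (fun π : Fin d → Equiv.Perm (Fin n) =>
      FreeGroup.lift π w x = x)) ⊆ (Finset.range k).biUnion Cj := by
    intro π hπ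
    rw [Finset.mem_filter] at hπ
    have hfix : BroderShamir.traj x m π k = BroderShamir.traj x m π 0 := by
      rw [← heval π, hπ.2]; rfl
    by_contra hnot
    simp only [Finset.mem_biUnion, Finset.mem_range, hCj, Finset.mem_filter,
      Finset.mem_univ, true_and, not_exists, not_and] at hnot
    have hfresh : ∀ j, j < k → BroderShamir.Free x m π j →
        ∀ t, t ≤ j → BroderShamir.traj x m π (j+1) ≠ BroderShamir.traj x m π t := by
      intro j hj hfree t ht hEq
      exact hnot j hj hfree (Finset.mem_image.mpr
        ⟨t, Finset.mem_range.mpr (by omega), hEq.symm⟩)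
    exact BroderShamir.traj_injective x m π k hred hfresh k le_rfl k le_rfl 0 hk0
      hfix.symm
  -- cardinality bound
  have hcard : ∀ j, j < k → (Cj j).card * (n - k) ≤ k * N := by
    intro j hj
    have hb := BroderShamir.card_bound x m j
    have h1 : (n - k) * (Cj j).card ≤ (n - j) * (Cj j).card :=
      Nat.mul_le_mul_right _ (by omega)
    have h2 : (j + 1) * N ≤ k * N := Nat.mul_le_mul_right _ (by omega)
    calc (Cj j).card * (n - k) = (n - k) * (Cj j).card := mul_comm _ _
      _ ≤ (n - j) * (Cj j).card := h1
      _ ≤ (j + 1) * N := hb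
      _ ≤ k * N := h2
  have hA : (Finset.univ.filter (fun π : Fin d → Equiv.Perm (Fin n) =>
      FreeGroup.lift π w x = x)).card * (n - k) ≤ k ^ 2 * N := by
    have hle1 : (Finset.univ.filter (fun π : Fin d → Equiv.Perm (Fin n) =>
        FreeGroup.lift π w x = x)).card ≤ ∑ j ∈ Finset.range k, (Cj j).card :=
      le_trans (Finset.card_le_card hsub) Finset.card_biUnion_le
    calc (Finset.univ.filter (fun π : Fin d → Equiv.Perm (Fin n) =>
          FreeGroup.lift π w x = x)).card * (n - k)
        ≤ (∑ j ∈ Finset.range k, (Cj j).card) * (n - k) :=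
          Nat.mul_le_mul_right _ hle1
      _ = ∑ j ∈ Finset.range k, (Cj j).card * (n - k) := by
          rw [Finset.sum_mul]
      _ ≤ ∑ _j ∈ Finset.range k, k * N := Finset.sum_le_sum (fun j hj =>
          hcard j (Finset.mem_range.mp hj))
      _ = k * (k * N) := by rw [Finset.sum_const, Finset.card_range, smul_eq_mul]
      _ = k ^ 2 * N := by ring
  -- pass to reals
  unfold probTuple
  rw [← hN]
  rw [div_le_div_iff₀ (by exact_mod_cast hNpos) (by
    have : (k : ℝ) < n := by exact_mod_cast hkn
    linarith)]
  have hcast : ((n : ℝ) - (k : ℝ)) = ((n - k : ℕ) : ℝ) := by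
    rw [Nat.cast_sub (le_of_lt hkn)]
  rw [hcast, Finset.filter_congr_decidable]
  exact_mod_cast hA
end
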